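/- Let Γ be a countable discrete group and f ∈ ℤΓ invertible in ℓ¹(Γ) with inverse w_f^Δ = f⁻¹. Then ξ = η ∘ ρ_{w_f^Δ} : ℓ∞(Γ,ℤ) → X_f is a well-defined surjective group homomorphism whose kernel is ρ_f(ℓ∞(Γ,ℤ)), and ξ(λ^γ v) = α_f^γ(ξ(v)) for every γ ∈ Γ and v ∈ ℓ∞(Γ,ℤ). -/

import Mathlib

open scoped BigOperators symmDiff Pointwise

noncomputable section

/-- The additive circle `𝕋 = ℝ/ℤ`. -/
abbrev Torus : Type := AddCircle (1 : ℝ)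

section GroupDefs

variable {Γ : Type*} [Group Γ]

/-- For `f ∈ ℤΓ`, the map `ρ_f : 𝕋^Γ → 𝕋^Γ`, `(ρ_f x)_{γ'} = Σ_γ f_γ • x_{γ'γ}`. -/
def rhoT (f : Γ →₀ ℤ) (x : Γ → Torus) : Γ → Torus :=
  fun γ' => f.sum fun γ c => c • x (γ' * γ)

/-- The compact abelian group `X_f = ker ρ_f ⊆ 𝕋^Γ` (as a subset). -/
def XSet (f : Γ →₀ ℤ) : Set (Γ → Torus) := {x | rhoT f x = 0}

/-- The left shift `(λ^γ x)_{γ'} = x_{γ⁻¹ γ'}` on `𝕋^Γ`; restricted to `X_f` this is `α_f^γ`. -/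
def lsh (γ : Γ) (x : Γ → Torus) : Γ → Torus := fun γ' => x (γ⁻¹ * γ')

/-- The left shift `(λ^γ w)_{γ'} = w_{γ⁻¹ γ'}` on real-valued functions. -/
def lshR (γ : Γ) (w : Γ → ℝ) : Γ → ℝ := fun γ' => w (γ⁻¹ * γ')

/-- Expansiveness of the `Γ`-action `α_f` on `X_f`: there is an open neighbourhood `U`
of `0` such that the only point of `X_f` all of whose translates stay in `U` is `0`
(equivalently, `⋂_γ α_f^γ (U ∩ X_f) = {0}`). -/
def ExpansiveAction (f : Γ →₀ ℤ) : Prop :=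
  ∃ U : Set (Γ → Torus), IsOpen U ∧ {x | x ∈ XSet f ∧ ∀ γ : Γ, lsh γ x ∈ U} = {0}

/-- `w ∈ ℓ∞(Γ)`: boundedness of a real-valued function. -/
def Bdd (w : Γ → ℝ) : Prop := ∃ C : ℝ, ∀ γ : Γ, |w γ| ≤ C

/-- `w ∈ ℓ∞(Γ,ℤ)`: all values are integers. -/
def IntValued (w : Γ → ℝ) : Prop := ∀ γ : Γ, ∃ k : ℤ, w γ = (k : ℝ)

/-- For `f ∈ ℤΓ`, the operator `ρ_f` on `ℓ∞(Γ)`: `(ρ_f w)_γ = Σ_{γ'} w_{γγ'} f_{γ'}`. -/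
def rhoInf (f : Γ →₀ ℤ) (w : Γ → ℝ) : Γ → ℝ :=
  fun γ => f.sum fun γ' c => (c : ℝ) * w (γ * γ')

/-- For `h ∈ ℓ¹(Γ)`, the operator `ρ_h` on `ℓ∞(Γ)`: `(ρ_h w)_γ = Σ_{γ'} w_{γγ'} h_{γ'}`. -/
def rhoL1 (h : Γ → ℝ) (w : Γ → ℝ) : Γ → ℝ :=
  fun γ => ∑' γ' : Γ, w (γ * γ') * h γ'

/-- Convolution on `ℓ¹(Γ)`: `(g·h)_γ = Σ_{γ'} g_{γ'} h_{γ'⁻¹γ}`. -/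
def conv (g h : Γ → ℝ) : Γ → ℝ := fun γ => ∑' γ' : Γ, g γ' * h (γ'⁻¹ * γ)

/-- Convolution on `ℓ¹(Γ,ℂ)`. -/
def convC (g h : Γ → ℂ) : Γ → ℂ := fun γ => ∑' γ' : Γ, g γ' * h (γ'⁻¹ * γ)

open Classical in
/-- The unit `δ₁` of the convolution algebra `ℓ¹(Γ)`. -/
def deltaOne : Γ → ℝ := fun γ => if γ = 1 then 1 else 0

open Classical in
/-- The unit `δ₁` of `ℓ¹(Γ,ℂ)`. -/
def deltaOneC : Γ → ℂ := fun γ => if γ = 1 then 1 else 0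

/-- `g` is a two-sided convolution inverse of `f` in `ℓ¹(Γ)`. -/
def IsL1Inverse (f g : Γ → ℝ) : Prop :=
  Summable g ∧ conv f g = deltaOne ∧ conv g f = deltaOne

/-- View `f ∈ ℤΓ` as an element of `ℓ¹(Γ)`. -/
def fR (f : Γ →₀ ℤ) : Γ → ℝ := fun γ => (f γ : ℝ)

/-- View `f ∈ ℤΓ` as an element of `ℓ¹(Γ,ℂ)`. -/
def fCC (f : Γ →₀ ℤ) : Γ → ℂ := fun γ => (f γ : ℂ)

/-- The `ℓ¹`-norm `‖f‖₁` of `f ∈ ℤΓ`. -/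
def finsuppL1 (f : Γ →₀ ℤ) : ℝ := f.sum fun _ c => |(c : ℝ)|

/-- The `ℓ¹`-norm of `h ∈ ℓ¹(Γ,ℂ)`. -/
def l1normC (h : Γ → ℂ) : ℝ := ∑' γ : Γ, ‖h γ‖

/-- Coordinatewise reduction mod 1, `η : ℓ∞(Γ) → 𝕋^Γ`. -/
def etaT (w : Γ → ℝ) : Γ → Torus := fun γ => ((w γ : ℝ) : Torus)

/-- The map `ξ = η ∘ ρ_{w}` for `w ∈ ℓ¹(Γ)`. -/
def xiMap (w : Γ → ℝ) (v : Γ → ℝ) : Γ → Torus := etaT (rhoL1 w v)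

/-- A point `x ∈ 𝕋^Γ` is homoclinic if `λ^γ x → 0` along the cofinite filter on `Γ`. -/
def IsHomoclinic (x : Γ → Torus) : Prop :=
  Filter.Tendsto (fun γ : Γ => lsh γ x) Filter.cofinite (nhds 0)

/-- The set of `Γ'`-fixed points of `α_f` in `X_f`. -/
def FixSet (f : Γ →₀ ℤ) (Γ' : Subgroup Γ) : Set (Γ → Torus) :=
  {x | x ∈ XSet f ∧ ∀ γ ∈ Γ', lsh γ x = x}

/-- Left `(K,ε)`-invariance of a finite set `Q ⊆ Γ`. -/
def LeftInv [DecidableEq Γ] (K : Finset Γ) (ε : ℝ) (Q : Finset Γ) : Prop :=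
  ∑ γ ∈ K, (((Q.image fun q => γ * q) ∆ Q).card : ℝ) / (Q.card : ℝ) < ε

/-- Right `(K,ε)`-invariance of a finite set `Q ⊆ Γ`. -/
def RightInv [DecidableEq Γ] (K : Finset Γ) (ε : ℝ) (Q : Finset Γ) : Prop :=
  ∑ γ ∈ K, (((Q.image fun q => q * γ) ∆ Q).card : ℝ) / (Q.card : ℝ) < ε

/-- Amenability: existence of a left Følner sequence. -/
def Amenable (Γ : Type*) [Group Γ] [DecidableEq Γ] : Prop :=
  ∃ Q : ℕ → Finset Γ, (∀ n, (Q n).Nonempty) ∧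
    ∀ (K : Finset Γ) (ε : ℝ), 0 < ε → ∃ N : ℕ, ∀ n ≥ N, LeftInv K ε (Q n)

/-- Residual finiteness: there is a sequence of finite-index normal subgroups with
trivial intersection. -/
def ResFinite (Γ : Type*) [Group Γ] : Prop :=
  ∃ N : ℕ → Subgroup Γ, (∀ n, (N n).Normal ∧ (N n).FiniteIndex) ∧
    ∀ γ : Γ, (∀ n, γ ∈ N n) → γ = 1

/-- `Q` is a fundamental domain for the coset space `Γ/Γ'`:
`{γQ : γ ∈ Γ'}` is a partition of `Γ`. -/
def IsFundDomain (Γ' : Subgroup Γ) (Q : Finset Γ) : Prop :=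
  ∀ x : Γ, ∃! p : Γ × Γ, p.1 ∈ Γ' ∧ p.2 ∈ Q ∧ p.1 * p.2 = x

/-- `lim_n Γ_n = {1}`: for every finite `K ⊆ Γ` eventually `Γ_n ∩ K⁻¹K = {1}`. -/
def LimTriv (N : ℕ → Subgroup Γ) : Prop :=
  ∀ K : Finset Γ, ∃ M : ℕ, ∀ n ≥ M, ∀ γ ∈ N n, (∃ a ∈ K, ∃ b ∈ K, γ = a⁻¹ * b) → γ = 1

/-- The word ball `B_F(n)` of radius `n` with respect to a generating set `F`. -/
def BallF (F : Finset Γ) (n : ℕ) : Set Γ :=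
  {γ | ∃ l : List Γ, l.length ≤ n ∧ (∀ a ∈ l, a ∈ F) ∧ l.prod = γ}

end GroupDefs

/-- The Hilbert space `ℓ²(Γ,ℂ)`. -/
abbrev H2 (Γ : Type*) : Type _ := lp (fun _ : Γ => ℂ) 2

section Hilbert

variable {Γ : Type*} [Group Γ]

open Classical in
/-- The standard basis vector `δ₁ ∈ ℓ²(Γ,ℂ)`. -/
def deltaL2 : H2 Γ := lp.single 2 (1 : Γ) (1 : ℂ)

/-- `A` is the right-convolution operator `ρ_f` on `ℓ²(Γ,ℂ)`,
`(ρ_f w)_γ = Σ_{γ'} w_{γγ'} f_{γ'}`. -/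
def IsRho (f : Γ → ℂ) (A : H2 Γ →L[ℂ] H2 Γ) : Prop :=
  ∀ (w : H2 Γ) (γ : Γ), (A w : Γ → ℂ) γ = ∑' γ' : Γ, (w : Γ → ℂ) (γ * γ') * f γ'

/-- The von Neumann trace of `log (A A*)`, i.e. `tr_{NΓ}(log (A A*)) = (log(AA*) δ₁)(1)`,
where `log` is given by the continuous functional calculus. -/
def trLogAAstar (A : H2 Γ →L[ℂ] H2 Γ) : ℝ :=
  (((@cfc ℝ _ IsSelfAdjoint _ _ _ _ _ _ _ _ _ IsSelfAdjoint.instContinuousFunctionalCalculus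
    Real.log (A * star A)) deltaL2 : Γ → ℂ) (1 : Γ)).re

/-- The Fuglede–Kadison determinant `det_{NΓ} A = exp(½ tr(log (A A*)))`. -/
def detFK (A : H2 Γ →L[ℂ] H2 Γ) : ℝ := Real.exp (2⁻¹ * trLogAAstar A)

open Classical in
/-- `f^{(n)} : Γ/Γ_n → ℂ`, integration along the fibres: `f^{(n)}(δ) = Σ_{γ ∈ δ} f_γ`. -/
def fQuot (f : Γ → ℂ) (H : Subgroup Γ) : (Γ ⧸ H) → ℂ :=
  fun δ => ∑' γ : Γ, if (QuotientGroup.mk γ : Γ ⧸ H) = δ then f γ else 0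

open Classical in
/-- The indicator of the identity coset in `ℓ²(Γ/Γ_n, ℂ)`. -/
def deltaQuot (H : Subgroup Γ) : (Γ ⧸ H) → ℂ :=
  fun δ => if δ = (QuotientGroup.mk (1 : Γ) : Γ ⧸ H) then 1 else 0

end Hilbert

/-!
The operators `ρ_h` on `ℓ∞(Γ)` form a right action of the convolution algebra `ℓ¹(Γ)`:
`ρ_g ∘ ρ_h = ρ_{g·h}` on bounded functions, by Fubini for the absolutely summable double series
`Σ_{a,c} v_{γc} g_a h_{a⁻¹c}`. Hence `ρ_f` and `ρ_w` are mutually inverse bijections of `ℓ∞(Γ)`.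
Reduction mod 1 intertwines `ρ_f` on `ℓ∞(Γ)` with `ρ_f` on `𝕋^Γ` and kills exactly the
integer-valued functions. So `ρ_f ξ(v) = η(v) = 0`; a point `x ∈ X_f` lifts to a bounded `u`, and
then `ρ_f u` is integer-valued with `ξ(ρ_f u) = η(u) = x`; and `ξ(v) = 0` iff `ρ_w v` is
integer-valued, i.e. iff `v = ρ_f (ρ_w v)` lies in `ρ_f(ℓ∞(Γ,ℤ))`.
-/

section

variable {Γ : Type*}

lemma Bdd.exists_nonneg {v : Γ → ℝ} (hv : Bdd v) : ∃ C, 0 ≤ C ∧ ∀ γ, |v γ| ≤ C := by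
  obtain ⟨C, hC⟩ := hv
  exact ⟨max C 0, le_max_right _ _, fun γ => (hC γ).trans (le_max_left _ _)⟩

lemma Bdd.summable_mul {v h : Γ → ℝ} (hv : Bdd v) (hh : Summable h) (φ : Γ → Γ) :
    Summable fun γ => v (φ γ) * h γ := by
  obtain ⟨C, -, hC⟩ := hv.exists_nonneg
  refine Summable.of_norm_bounded (hh.abs.mul_left C) fun γ => ?_
  rw [Real.norm_eq_abs, abs_mul]
  exact mul_le_mul_of_nonneg_right (hC _) (abs_nonneg _)

lemma etaT_eq_zero_iff {u : Γ → ℝ} : etaT u = 0 ↔ IntValued u := by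
  simp only [funext_iff, etaT, Pi.zero_apply, AddCircle.coe_eq_zero_iff, IntValued, zsmul_eq_mul,
    mul_one]
  exact forall_congr' fun γ => exists_congr fun k => eq_comm

lemma etaT_add (u u' : Γ → ℝ) : etaT (u + u') = etaT u + etaT u' := by
  funext γ
  simp [etaT]

lemma exists_bdd_etaT_eq (x : Γ → Torus) : ∃ u, Bdd u ∧ etaT u = x := by
  have : Fact ((0 : ℝ) < 1) := ⟨one_pos⟩
  refine ⟨fun γ => AddCircle.equivIco 1 0 (x γ), ⟨1, fun γ => ?_⟩, ?_⟩
  · have h := (AddCircle.equivIco 1 0 (x γ)).2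
    simp only [Set.mem_Ico, zero_add] at h
    exact abs_le.2 ⟨by linarith [h.1], h.2.le⟩
  · funext γ
    exact (AddCircle.equivIco 1 0).symm_apply_apply (x γ)

lemma summable_fR (f : Γ →₀ ℤ) : Summable (fR f) :=
  summable_of_ne_finset_zero (s := f.support) fun γ hγ => by
    simp [fR, Finsupp.notMem_support_iff.mp hγ]

variable [Group Γ]

lemma bdd_rhoL1 {v h : Γ → ℝ} (hv : Bdd v) (hh : Summable h) : Bdd (rhoL1 h v) := by
  obtain ⟨C, -, hC⟩ := hv.exists_nonneg
  refine ⟨C * ∑' γ, |h γ|, fun γ => ?_⟩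
  rw [rhoL1, ← Real.norm_eq_abs]
  refine tsum_of_norm_bounded (hh.abs.hasSum.mul_left C) fun γ' => ?_
  rw [Real.norm_eq_abs, abs_mul]
  exact mul_le_mul_of_nonneg_right (hC _) (abs_nonneg _)

lemma rhoL1_add {h v v' : Γ → ℝ} (hh : Summable h) (hv : Bdd v) (hv' : Bdd v') :
    rhoL1 h (v + v') = rhoL1 h v + rhoL1 h v' := by
  funext γ
  simp only [rhoL1, Pi.add_apply, add_mul]
  exact (hv.summable_mul hh _).tsum_add (hv'.summable_mul hh _)

lemma rhoL1_lshR (h : Γ → ℝ) (γ : Γ) (v : Γ → ℝ) :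
    rhoL1 h (lshR γ v) = lshR γ (rhoL1 h v) := by
  funext γ'
  simp only [rhoL1, lshR, mul_assoc]

lemma rhoL1_deltaOne (v : Γ → ℝ) : rhoL1 deltaOne v = v := by
  funext γ
  rw [rhoL1, tsum_eq_single 1 fun γ' hγ' => by simp [deltaOne, hγ']]
  simp [deltaOne]

lemma rhoL1_rhoL1 {g h v : Γ → ℝ} (hg : Summable g) (hh : Summable h) (hv : Bdd v) :
    rhoL1 g (rhoL1 h v) = rhoL1 (conv g h) v := by
  funext γ
  obtain ⟨C, -, hC⟩ := hv.exists_nonneg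
  set F : Γ → Γ → ℝ := fun a c => v (γ * c) * (g a * h (a⁻¹ * c))
  have hF : Summable (Function.uncurry F) := by
    rw [← (Equiv.prodShear (Equiv.refl Γ) Equiv.mulLeft).summable_iff]
    refine Summable.of_norm_bounded
      ((hg.abs.mul_of_nonneg hh.abs (fun _ => abs_nonneg _) fun _ => abs_nonneg _).mul_left C)
      fun p => ?_
    simp only [Function.comp_apply, Function.uncurry, Equiv.prodShear_apply, Equiv.refl_apply,
      Equiv.coe_mulLeft, inv_mul_cancel_left, F, Real.norm_eq_abs, abs_mul]
    exact mul_le_mul_of_nonneg_right (hC _) (by positivity)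
  calc rhoL1 g (rhoL1 h v) γ = ∑' a, ∑' c, F a c := tsum_congr fun a => by
        rw [rhoL1, ← tsum_mul_right, ← (Equiv.mulLeft a).tsum_eq (F a)]
        simp only [F, Equiv.coe_mulLeft, inv_mul_cancel_left, mul_assoc]
        exact tsum_congr fun b => by ring
    _ = ∑' c, ∑' a, F a c := hF.tsum_comm.symm
    _ = rhoL1 (conv g h) v γ := tsum_congr fun c => by rw [conv, ← tsum_mul_left]

lemma rhoT_etaT (f : Γ →₀ ℤ) (u : Γ → ℝ) : rhoT f (etaT u) = etaT (rhoInf f u) := by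
  funext γ
  simp [rhoT, etaT, rhoInf, Finsupp.sum]

lemma rhoL1_fR (f : Γ →₀ ℤ) (u : Γ → ℝ) : rhoL1 (fR f) u = rhoInf f u := by
  funext γ
  have hf : ∀ γ' ∉ f.support, u (γ * γ') * fR f γ' = 0 := fun γ' hγ' => by
    simp [fR, Finsupp.notMem_support_iff.mp hγ']
  rw [rhoL1, rhoInf, Finsupp.sum, tsum_eq_sum hf]
  exact Finset.sum_congr rfl fun γ' _ => mul_comm _ _

lemma bdd_rhoInf (f : Γ →₀ ℤ) {u : Γ → ℝ} (hu : Bdd u) : Bdd (rhoInf f u) :=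
  rhoL1_fR f u ▸ bdd_rhoL1 hu (summable_fR f)

lemma rhoInf_rhoL1_of_conv_eq_deltaOne {f : Γ →₀ ℤ} {h v : Γ → ℝ}
    (hfh : conv (fR f) h = deltaOne) (hh : Summable h) (hv : Bdd v) :
    rhoInf f (rhoL1 h v) = v := by
  rw [← rhoL1_fR, rhoL1_rhoL1 (summable_fR f) hh hv, hfh, rhoL1_deltaOne]

lemma rhoL1_rhoInf_of_conv_eq_deltaOne {f : Γ →₀ ℤ} {h u : Γ → ℝ}
    (hhf : conv h (fR f) = deltaOne) (hh : Summable h) (hu : Bdd u) :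
    rhoL1 h (rhoInf f u) = u := by
  rw [← rhoL1_fR, rhoL1_rhoL1 hh (summable_fR f) hu, hhf, rhoL1_deltaOne]

end

theorem statement2_general {Γ : Type*} [Group Γ] (f : Γ →₀ ℤ) (w : Γ → ℝ)
    (hw : IsL1Inverse (fR f) w) :
    (∀ v : Γ → ℝ, Bdd v → IntValued v → xiMap w v ∈ XSet f) ∧
    (∀ v v' : Γ → ℝ, Bdd v → IntValued v → Bdd v' → IntValued v' →
      xiMap w (v + v') = xiMap w v + xiMap w v') ∧
    (∀ x ∈ XSet f, ∃ v : Γ → ℝ, Bdd v ∧ IntValued v ∧ xiMap w v = x) ∧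
    (∀ v : Γ → ℝ, Bdd v → IntValued v →
      (xiMap w v = 0 ↔ ∃ u : Γ → ℝ, Bdd u ∧ IntValued u ∧ rhoInf f u = v)) ∧
    (∀ (γ : Γ) (v : Γ → ℝ), Bdd v → IntValued v →
      xiMap w (lshR γ v) = lsh γ (xiMap w v)) := by
  obtain ⟨hsum, hfw, hwf⟩ := hw
  refine ⟨fun v hv hvZ => ?_, fun v v' hv _ hv' _ => ?_, fun x hx => ?_,
    fun v hv _ => ?_, fun γ v _ _ => ?_⟩
  · change rhoT f (etaT (rhoL1 w v)) = 0
    rwa [rhoT_etaT, rhoInf_rhoL1_of_conv_eq_deltaOne hfw hsum hv, etaT_eq_zero_iff]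
  · rw [xiMap, rhoL1_add hsum hv hv', etaT_add]
    rfl
  · obtain ⟨u, hu, rfl⟩ := exists_bdd_etaT_eq x
    have huZ : IntValued (rhoInf f u) := etaT_eq_zero_iff.1 (rhoT_etaT f u ▸ hx)
    exact ⟨rhoInf f u, bdd_rhoInf f hu, huZ, by
      rw [xiMap, rhoL1_rhoInf_of_conv_eq_deltaOne hwf hsum hu]⟩
  · rw [xiMap, etaT_eq_zero_iff]
    constructor
    · exact fun hZ => ⟨rhoL1 w v, bdd_rhoL1 hv hsum, hZ, rhoInf_rhoL1_of_conv_eq_deltaOne hfw hsum hv⟩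
    · rintro ⟨u, hu, huZ, rfl⟩
      rwa [rhoL1_rhoInf_of_conv_eq_deltaOne hwf hsum hu]
  · rw [xiMap, rhoL1_lshR]
    rfl

/-- Let `Γ` be a countable discrete group and `f ∈ ℤΓ` invertible in
`ℓ¹(Γ)` with inverse `w = w_f^Δ = f⁻¹`. Then `ξ = η ∘ ρ_w : ℓ∞(Γ,ℤ) → X_f` is a
well-defined surjective group homomorphism with kernel `ρ_f(ℓ∞(Γ,ℤ))`, and
`ξ ∘ λ^γ = α_f^γ ∘ ξ` for every `γ ∈ Γ`. -/
theorem statement2 {Γ : Type*} [Group Γ] [Countable Γ] (f : Γ →₀ ℤ) (w : Γ → ℝ)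
    (hw : IsL1Inverse (fR f) w) :
    (∀ v : Γ → ℝ, Bdd v → IntValued v → xiMap w v ∈ XSet f) ∧
    (∀ v v' : Γ → ℝ, Bdd v → IntValued v → Bdd v' → IntValued v' →
      xiMap w (v + v') = xiMap w v + xiMap w v') ∧
    (∀ x ∈ XSet f, ∃ v : Γ → ℝ, Bdd v ∧ IntValued v ∧ xiMap w v = x) ∧
    (∀ v : Γ → ℝ, Bdd v → IntValued v →
      (xiMap w v = 0 ↔ ∃ u : Γ → ℝ, Bdd u ∧ IntValued u ∧ rhoInf f u = v)) ∧
    (∀ (γ : Γ) (v : Γ → ℝ), Bdd v → IntValued v →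
      xiMap w (lshR γ v) = lsh γ (xiMap w v)) :=
  statement2_general f w hw
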